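/- arXiv:1905.05660 — 2 statements merged into one kernel-verified Lean document; each statement's English description precedes it below -/
import Mathlib

section
/- Let H be a real Hilbert space, let I be a countable index set, and for each i ∈ I let T_i : H → H be a cutter with C_i := Fix T_i and C := ⋂_{i ∈ I} C_i. Let Q ⊆ H be nonempty, closed and convex with int(C) ∩ Q ≠ ∅. Let (Ω, F, P) be a probability space and {I_k}_{k=0}^∞ a random control sequence in I (i.i.d. I_k : Ω → 2^I \ {∅} with sup_{ω,k} #(I_k(ω)) < ∞) such that P({ω : I_k(ω) ∩ I_+(x) ≠ ∅}) > 0 for every x ∉ C, where I_+(x) := {i : x ∉ C_i}. For each ω define x_0(ω) := x_0 ∈ Q and x_{k+1}(ω) := P_Q( x_k(ω) + α_{[k]} Σ_{i ∈ I_k(ω)} λ_{i,k}(x_k(ω)) β_{i,k}(x_k(ω))(T_i(x_k(ω)) − x_k(ω)) ), with [k], β_{i,k}, α_k ∈ (0,2], r_k, φ_i, and λ_{i,k} as in the deterministic method, and assume: r_k → 0, Σ_k α_k r_k = ∞; for each bounded S ⊆ H there are 0 < δ ≤ Δ < ∞ with δ ≤ φ_i(x) ≤ Δ on S; and λ_{i,k}(x)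 ≥ λ > 0 for i ∈ I_k ∩ I_+(x) with weights summing to 1 over I_k. Then: (a) almost surely the realized control sequence {I_k(ω)}_{k=0}^∞ is well matched with C; and (b) if P({ω : {x_k(ω)} is bounded}) > 0, then P(∃ k : x_k(ω) ∈ C ∩ Q | {x_k(ω)} is bounded) = 1. -/
/-!
Pick `z ∈ Q` and `ρ > 0` with `closedBall z ρ ⊆ C`. For a cutter `T` the whole ball lies in the
half-space `{w | ⟪x - T x, w - T x⟫ ≤ 0}`, which yields
`‖T x - x‖ (‖T x - x‖ + ρ) ≤ ⟪T x - x, z - x⟫`. Hence a step of the method moves the iterate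
exactly when a sampled operator is active, and once `r_[k]` is small every moving step decreases
`‖x_k - z‖²` by at least a fixed multiple of `α_[k] r_[k]`; on bounded orbits the constant comes
from the bounds on `φ_i`. If no iterate were in `C ∩ Q`, a well-matched control sequence would
force infinitely many moving steps, and `∑ α_k r_k = ∞` would push `‖x_k - z‖²` below zero.

Randomness enters only through well-matchedness: an index drawn with positive probability is, by
independence and the second Borel–Cantelli lemma, drawn infinitely often almost surely, and since
`I` is countable this holds for all such indices at once.
-/

open MeasureTheory
open scoped RealInnerProductSpace Classical

open Filter Metric ProbabilityTheory Topology

lemma proj_eq_self {E : Type*} [NormedAddCommGroup E] {Q : Set E} {P : E → E}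
    (hPmin : ∀ u, ∀ w ∈ Q, ‖P u - u‖ ≤ ‖w - u‖) {v : E} (hv : v ∈ Q) : P v = v := by
  simpa [sub_eq_zero] using hPmin v v hv

section InnerProductSpace

variable {H : Type*} [NormedAddCommGroup H] [InnerProductSpace ℝ H]

lemma norm_sub_smul_sum_sq_le {ι : Type*} (s : Finset ι) {w : ι → ℝ} (hw₀ : ∀ i ∈ s, 0 ≤ w i)
    (hw₁ : ∑ i ∈ s, w i = 1) {v : ι → H} {c : ι → ℝ} {y : H}
    (hv : ∀ i ∈ s, ‖v i‖ ^ 2 + c i ≤ ⟪v i, y⟫) {α : ℝ} (hα₀ : 0 ≤ α) (hα₂ : α ≤ 2) :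
    ‖y - α • ∑ i ∈ s, w i • v i‖ ^ 2 ≤ ‖y‖ ^ 2 - 2 * α * ∑ i ∈ s, w i * c i := by
  set d := ∑ i ∈ s, w i • v i
  have hd : ‖d‖ ^ 2 ≤ ∑ i ∈ s, w i * ‖v i‖ ^ 2 :=
    (convexOn_univ_norm.pow (fun _ _ => norm_nonneg _) 2).map_sum_le hw₀ hw₁
      (fun _ _ => Set.mem_univ _)
  have hdy : ∑ i ∈ s, w i * ‖v i‖ ^ 2 + ∑ i ∈ s, w i * c i ≤ ⟪d, y⟫ := by
    rw [← Finset.sum_add_distrib, sum_inner]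
    refine Finset.sum_le_sum fun i hi => ?_
    rw [real_inner_smul_left, ← mul_add]
    exact mul_le_mul_of_nonneg_left (hv i hi) (hw₀ i hi)
  have hα : α ^ 2 * ‖d‖ ^ 2 ≤ 2 * α * ‖d‖ ^ 2 := by
    gcongr
    nlinarith
  rw [norm_sub_sq_real, real_inner_smul_right, norm_smul, mul_pow, Real.norm_eq_abs, sq_abs,
    real_inner_comm]
  nlinarith

def IsCutter (T : H → H) : Prop :=
  ∀ x z, T z = z → ⟪x - T x, z - T x⟫ ≤ 0

lemma IsCutter.mul_le_inner {T : H → H} (hT : IsCutter T) {z : H} {ρ : ℝ} (hρ : 0 ≤ ρ)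
    (hball : ∀ w ∈ closedBall z ρ, T w = w) (x : H) :
    ‖T x - x‖ * (‖T x - x‖ + ρ) ≤ ⟪T x - x, z - x⟫ := by
  set u := T x - x
  rcases eq_or_ne u 0 with hu | hu
  · simp [hu]
  have hu' : 0 < ‖u‖ := norm_pos_iff.mpr hu
  -- the point of the ball furthest from `z` in the direction `x - T x`
  set w := z - (ρ / ‖u‖) • u
  have hw : T w = w := hball w (by
    rw [mem_closedBall, dist_eq_norm, show w - z = -((ρ / ‖u‖) • u) by simp only [w]; abel,
      norm_neg, norm_smul, Real.norm_eq_abs, abs_of_nonneg (by positivity),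
      div_mul_cancel₀ _ hu'.ne'])
  have hcut : 0 ≤ ⟪u, w - T x⟫ := by
    have := hT x w hw
    rw [show x - T x = -u by simp only [u]; abel, inner_neg_left] at this
    linarith
  have hsplit : z - x = (w - T x) + u + (ρ / ‖u‖) • u := by simp only [w, u]; abel
  rw [hsplit, inner_add_right, inner_add_right, real_inner_smul_right, real_inner_self_eq_norm_sq]
  field_simp
  nlinarith

/-- The step `β_{i,k}(x) (T_i x - x)` of the method, with `e` standing for `r_[k] / φ_i(x)`. -/
noncomputable def relaxedStep (T : H → H) (e : ℝ) (x : H) : H :=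
  (if T x ≠ x then (e + ‖T x - x‖) / ‖T x - x‖ else 0) • (T x - x)

section RelaxedStep

variable {T : H → H} {e : ℝ} {x : H}

lemma relaxedStep_of_eq (h : T x = x) : relaxedStep T e x = 0 := by
  simp [relaxedStep, h]

lemma norm_relaxedStep (he : 0 ≤ e) (h : T x ≠ x) : ‖relaxedStep T e x‖ = e + ‖T x - x‖ := by
  have hu : 0 < ‖T x - x‖ := norm_pos_iff.mpr (sub_ne_zero.mpr h)
  rw [relaxedStep, if_pos h, norm_smul, Real.norm_eq_abs, abs_of_nonneg (by positivity),
    div_mul_cancel₀ _ hu.ne']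

lemma IsCutter.mul_le_inner_relaxedStep (hT : IsCutter T) {z : H} {ρ : ℝ} (hρ : 0 ≤ ρ)
    (hball : ∀ w ∈ closedBall z ρ, T w = w) (he : 0 ≤ e) (h : T x ≠ x) :
    (e + ‖T x - x‖) * (‖T x - x‖ + ρ) ≤ ⟪relaxedStep T e x, z - x⟫ := by
  have hu : 0 < ‖T x - x‖ := norm_pos_iff.mpr (sub_ne_zero.mpr h)
  rw [relaxedStep, if_pos h, real_inner_smul_left]
  calc (e + ‖T x - x‖) * (‖T x - x‖ + ρ)
      = (e + ‖T x - x‖) / ‖T x - x‖ * (‖T x - x‖ * (‖T x - x‖ + ρ)) := by field_simp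
    _ ≤ _ := by gcongr; exact hT.mul_le_inner hρ hball x

lemma IsCutter.sq_add_le_inner_relaxedStep (hT : IsCutter T) {z : H} {ρ : ℝ} (hρ : 0 ≤ ρ)
    (hball : ∀ w ∈ closedBall z ρ, T w = w) (he : 0 ≤ e) (x : H) :
    ‖relaxedStep T e x‖ ^ 2 + ‖relaxedStep T e x‖ * (ρ - e) ≤ ⟪relaxedStep T e x, z - x⟫ := by
  by_cases h : T x = x
  · simp [relaxedStep_of_eq h]
  rw [norm_relaxedStep he h]
  linarith [hT.mul_le_inner_relaxedStep hρ hball he h]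

lemma IsCutter.inner_relaxedStep_pos (hT : IsCutter T) {z : H} {ρ : ℝ} (hρ : 0 < ρ)
    (hball : ∀ w ∈ closedBall z ρ, T w = w) (he : 0 ≤ e) (h : T x ≠ x) :
    0 < ⟪relaxedStep T e x, z - x⟫ := by
  have hu : 0 < ‖T x - x‖ := norm_pos_iff.mpr (sub_ne_zero.mpr h)
  exact lt_of_lt_of_le (by positivity) (hT.mul_le_inner_relaxedStep hρ.le hball he h)

lemma IsCutter.inner_relaxedStep_nonneg (hT : IsCutter T) {z : H} {ρ : ℝ} (hρ : 0 < ρ)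
    (hball : ∀ w ∈ closedBall z ρ, T w = w) (he : 0 ≤ e) (x : H) :
    0 ≤ ⟪relaxedStep T e x, z - x⟫ := by
  by_cases h : T x = x
  · simp [relaxedStep_of_eq h]
  exact (hT.inner_relaxedStep_pos hρ hball he h).le

end RelaxedStep

section Projection

variable {Q : Set H} {P : H → H}

lemma inner_sub_proj_le_zero (hQ : Convex ℝ Q) (hPmem : ∀ u, P u ∈ Q)
    (hPmin : ∀ u, ∀ w ∈ Q, ‖P u - u‖ ≤ ‖w - u‖) (v : H) {w : H} (hw : w ∈ Q) :
    ⟪v - P v, w - P v⟫ ≤ 0 := by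
  have : Nonempty Q := ⟨⟨w, hw⟩⟩
  refine (norm_eq_iInf_iff_real_inner_le_zero hQ (hPmem v)).mp (le_antisymm ?_ ?_) w hw
  · exact le_ciInf fun w' => by simpa only [norm_sub_rev v] using hPmin v w' w'.2
  · exact ciInf_le ⟨0, Set.forall_mem_range.2 fun _ => norm_nonneg _⟩ (⟨P v, hPmem v⟩ : Q)

lemma norm_proj_sub_sq_le (hQ : Convex ℝ Q) (hPmem : ∀ u, P u ∈ Q)
    (hPmin : ∀ u, ∀ w ∈ Q, ‖P u - u‖ ≤ ‖w - u‖) (v : H) {w : H} (hw : w ∈ Q) :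
    ‖P v - w‖ ^ 2 ≤ ‖v - w‖ ^ 2 := by
  have h := inner_sub_proj_le_zero hQ hPmem hPmin v hw
  have hsplit : ‖v - w‖ ^ 2 = ‖v - P v‖ ^ 2 - 2 * ⟪v - P v, w - P v⟫ + ‖w - P v‖ ^ 2 := by
    rw [← norm_sub_sq_real, sub_sub_sub_cancel_right]
  rw [hsplit, norm_sub_rev]
  nlinarith [sq_nonneg ‖v - P v‖]

lemma proj_add_smul_ne (hQ : Convex ℝ Q) (hPmem : ∀ u, P u ∈ Q)
    (hPmin : ∀ u, ∀ w ∈ Q, ‖P u - u‖ ≤ ‖w - u‖) {z : H} (hz : z ∈ Q) {x d : H} {α : ℝ}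
    (hα : 0 < α) (hd : 0 < ⟪d, z - x⟫) : P (x + α • d) ≠ x := by
  intro h
  have := inner_sub_proj_le_zero hQ hPmem hPmin (x + α • d) hz
  rw [h, add_sub_cancel_left, real_inner_smul_left] at this
  nlinarith

end Projection

section Step

variable {ι : Type*} {T : ι → H → H} {Q : Set H} {P : H → H} {J : Finset ι} {w e : ι → ℝ}
  {x z : H} {ρ α : ℝ}

lemma inner_sum_relaxedStep_pos (hT : ∀ i, IsCutter (T i)) (hρ : 0 < ρ)
    (hball : ∀ i, ∀ y ∈ closedBall z ρ, T i y = y) (hw : ∀ i ∈ J, 0 ≤ w i)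
    (he : ∀ i ∈ J, 0 ≤ e i) {i₀ : ι} (hi₀ : i₀ ∈ J) (hwi₀ : 0 < w i₀) (hTi₀ : T i₀ x ≠ x) :
    0 < ⟪∑ i ∈ J, w i • relaxedStep (T i) (e i) x, z - x⟫ := by
  rw [sum_inner]
  refine Finset.sum_pos' (fun i hi => ?_) ⟨i₀, hi₀, ?_⟩ <;> rw [real_inner_smul_left]
  · exact mul_nonneg (hw i hi) ((hT i).inner_relaxedStep_nonneg hρ (hball i) (he i hi) x)
  · exact mul_pos hwi₀ ((hT i₀).inner_relaxedStep_pos hρ (hball i₀) (he i₀ hi₀) hTi₀)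

lemma proj_step_ne_iff (hT : ∀ i, IsCutter (T i)) (hQ : Convex ℝ Q) (hPmem : ∀ u, P u ∈ Q)
    (hPmin : ∀ u, ∀ w ∈ Q, ‖P u - u‖ ≤ ‖w - u‖) (hz : z ∈ Q) (hρ : 0 < ρ)
    (hball : ∀ i, ∀ y ∈ closedBall z ρ, T i y = y) (hw : ∀ i ∈ J, 0 ≤ w i)
    (hw_pos : ∀ i ∈ J, T i x ≠ x → 0 < w i) (he : ∀ i ∈ J, 0 ≤ e i) (hα : 0 < α)
    (hx : x ∈ Q) :
    P (x + α • ∑ i ∈ J, w i • relaxedStep (T i) (e i) x) ≠ x ↔ ∃ i ∈ J, T i x ≠ x := by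
  constructor
  · intro h
    by_contra! hfix
    rw [Finset.sum_eq_zero fun i hi => by rw [relaxedStep_of_eq (hfix i hi), smul_zero],
      smul_zero, add_zero, proj_eq_self hPmin hx] at h
    exact h rfl
  · rintro ⟨i₀, hi₀, hTi₀⟩
    exact proj_add_smul_ne hQ hPmem hPmin hz hα
      (inner_sum_relaxedStep_pos hT hρ hball hw he hi₀ (hw_pos i₀ hi₀ hTi₀) hTi₀)

lemma norm_proj_step_sub_sq_le (hT : ∀ i, IsCutter (T i)) (hQ : Convex ℝ Q)
    (hPmem : ∀ u, P u ∈ Q) (hPmin : ∀ u, ∀ w ∈ Q, ‖P u - u‖ ≤ ‖w - u‖) (hz : z ∈ Q)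
    (hρ : 0 ≤ ρ) (hball : ∀ i, ∀ y ∈ closedBall z ρ, T i y = y)
    (hw₀ : ∀ i ∈ J, 0 ≤ w i) (hw₁ : ∑ i ∈ J, w i = 1) {ε : ℝ} (hε : 0 ≤ ε)
    (he : ∀ i ∈ J, ε ≤ e i ∧ e i ≤ ρ / 2) (hα₀ : 0 ≤ α) (hα₂ : α ≤ 2) {i₀ : ι} (hi₀ : i₀ ∈ J)
    (hTi₀ : T i₀ x ≠ x) :
    ‖P (x + α • ∑ i ∈ J, w i • relaxedStep (T i) (e i) x) - z‖ ^ 2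
      ≤ ‖x - z‖ ^ 2 - α * w i₀ * ε * ρ := by
  set v := fun i => relaxedStep (T i) (e i) x
  set d := ∑ i ∈ J, w i • v i
  have he₀ : ∀ i ∈ J, 0 ≤ e i := fun i hi => hε.trans (he i hi).1
  have hstep := norm_sub_smul_sum_sq_le J hw₀ hw₁ (c := fun i => ‖v i‖ * (ρ - e i))
    (y := z - x) (fun i hi => (hT i).sq_add_le_inner_relaxedStep hρ (hball i) (he₀ i hi) x)
    hα₀ hα₂
  have hgain : w i₀ * ε * ρ ≤ 2 * ∑ i ∈ J, w i * (‖v i‖ * (ρ - e i)) := by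
    have hterm : ∀ i ∈ J, 0 ≤ w i * (‖v i‖ * (ρ - e i)) := fun i hi =>
      mul_nonneg (hw₀ i hi) (mul_nonneg (norm_nonneg _) (by linarith [(he i hi).2]))
    have hvi₀ : ε ≤ ‖v i₀‖ := by
      rw [norm_relaxedStep (he₀ i₀ hi₀) hTi₀]
      linarith [norm_nonneg (T i₀ x - x), (he i₀ hi₀).1]
    calc w i₀ * ε * ρ = 2 * (w i₀ * (ε * (ρ / 2))) := by ring
      _ ≤ 2 * (w i₀ * (‖v i₀‖ * (ρ - e i₀))) := by
        have := hw₀ i₀ hi₀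
        have := he i₀ hi₀
        gcongr
        linarith
      _ ≤ 2 * ∑ i ∈ J, w i * (‖v i‖ * (ρ - e i)) := by
        gcongr
        exact Finset.single_le_sum hterm hi₀
  calc ‖P (x + α • d) - z‖ ^ 2 ≤ ‖x + α • d - z‖ ^ 2 := norm_proj_sub_sq_le hQ hPmem hPmin _ hz
    _ = ‖(z - x) - α • d‖ ^ 2 := by rw [← norm_neg]; congr 2; abel
    _ ≤ ‖z - x‖ ^ 2 - 2 * α * ∑ i ∈ J, w i * (‖v i‖ * (ρ - e i)) := hstep
    _ ≤ ‖x - z‖ ^ 2 - α * w i₀ * ε * ρ := by rw [norm_sub_rev]; nlinarith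

lemma norm_proj_step_sub_sq_add_le (hT : ∀ i, IsCutter (T i)) (hQ : Convex ℝ Q)
    (hPmem : ∀ u, P u ∈ Q) (hPmin : ∀ u, ∀ w ∈ Q, ‖P u - u‖ ≤ ‖w - u‖) (hz : z ∈ Q)
    (hρ : 0 ≤ ρ) (hball : ∀ i, ∀ y ∈ closedBall z ρ, T i y = y)
    (hw₀ : ∀ i ∈ J, 0 ≤ w i) (hw₁ : ∑ i ∈ J, w i = 1) {φ : ι → ℝ} {r δ Δ : ℝ} (hr : 0 < r)
    (hδ : 0 < δ) (hφ : ∀ i ∈ J, δ ≤ φ i ∧ φ i ≤ Δ) (hrδ : r ≤ δ * ρ / 2) (hα₀ : 0 ≤ α)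
    (hα₂ : α ≤ 2) {i₀ : ι} (hi₀ : i₀ ∈ J) (hTi₀ : T i₀ x ≠ x) {lam₀ : ℝ} (hlam₀ : lam₀ ≤ w i₀) :
    ‖P (x + α • ∑ i ∈ J, w i • relaxedStep (T i) (r / φ i) x) - z‖ ^ 2
      + lam₀ * ρ / Δ * (α * r) ≤ ‖x - z‖ ^ 2 := by
  have hΔ : 0 < Δ := hδ.trans_le ((hφ i₀ hi₀).1.trans (hφ i₀ hi₀).2)
  have he : ∀ i ∈ J, r / Δ ≤ r / φ i ∧ r / φ i ≤ ρ / 2 := fun i hi =>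
    ⟨div_le_div_of_nonneg_left hr.le (hδ.trans_le (hφ i hi).1) (hφ i hi).2,
      (div_le_div_of_nonneg_left hr.le hδ (hφ i hi).1).trans ((div_le_iff₀ hδ).2 (by linarith))⟩
  have hdesc := norm_proj_step_sub_sq_le hT hQ hPmem hPmin hz hρ hball hw₀ hw₁
    (div_nonneg hr.le hΔ.le) he hα₀ hα₂ hi₀ hTi₀
  have hgain : α * lam₀ * (r / Δ) * ρ ≤ α * w i₀ * (r / Δ) * ρ := by gcongr
  linarith [show lam₀ * ρ / Δ * (α * r) = α * lam₀ * (r / Δ) * ρ by ring]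

end Step

end InnerProductSpace

lemma infinite_setOf_ne_succ {β : Type*} {x : ℕ → β} {A : ℕ → β → Prop}
    (hmove : ∀ k, A k (x k) → x (k + 1) ≠ x k) (hA : ∀ n, {k | A k (x n)}.Infinite) :
    {k | x k ≠ x (k + 1)}.Infinite := by
  intro hfin
  obtain ⟨n, hn⟩ := hfin.bddAbove
  have hconst : ∀ k, n + 1 ≤ k → x k = x (n + 1) := by
    intro k hk
    induction k, hk using Nat.le_induction with
    | base => rfl
    | succ k hk ih =>
      rw [← ih]
      by_contra h
      exact absurd (hn (Ne.symm h)) (by omega)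
  obtain ⟨k, hk, hnk⟩ := (hA (n + 1)).exists_gt n
  rw [← hconst k hnk] at hk
  exact hmove k hk (by rw [hconst k hnk, hconst (k + 1) (by omega)])

lemma finite_setOf_of_descent {p : ℕ → Prop} [DecidablePred p] {a s : ℕ → ℝ}
    (ha : ∀ k, 0 ≤ a k) (hs : Tendsto (fun n => ∑ m ∈ Finset.range n, s m) atTop atTop)
    {N : ℕ} (hdesc : ∀ k, N ≤ Nat.count p k → p k → a (k + 1) + s (Nat.count p k) ≤ a k)
    (hstay : ∀ k, ¬ p k → a (k + 1) = a k) :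
    {k | p k}.Finite := by
  by_contra hp
  have hcount : Tendsto (Nat.count p) atTop atTop :=
    tendsto_atTop_atTop_of_monotone (Nat.count_monotone p)
      fun n => ⟨Nat.nth p n, (Nat.count_nth_of_infinite hp n).ge⟩
  set V := fun k => a k + ∑ m ∈ Finset.range (Nat.count p k), s m
  obtain ⟨K, hK⟩ := eventually_atTop.mp (hcount.eventually_ge_atTop N)
  have hV : ∀ k, K ≤ k → V k ≤ V K := by
    intro k hk
    induction k, hk using Nat.le_induction with
    | base => rfl
    | succ k hk ih =>
      refine le_trans ?_ ih
      simp only [V, Nat.count_succ]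
      by_cases h : p k
      · rw [if_pos h, Finset.sum_range_succ]
        linarith [hdesc k (hK k hk) h]
      · rw [if_neg h, add_zero, hstay k h]
  obtain ⟨k, hk, hkK⟩ :=
    (((hs.comp hcount).eventually_gt_atTop (V K)).and (eventually_ge_atTop K)).exists
  have := hV k hkK
  simp only [Function.comp, V] at hk this
  linarith [ha k]

theorem exists_iterate_mem_of_wellMatched {H : Type*} [NormedAddCommGroup H]
    [InnerProductSpace ℝ H] {ι : Type*} (T : ι → H → H) (hT : ∀ i, IsCutter (T i))
    {Q : Set H} (hQ : Convex ℝ Q) {P : H → H} (hPmem : ∀ u, P u ∈ Q)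
    (hPmin : ∀ u, ∀ w ∈ Q, ‖P u - u‖ ≤ ‖w - u‖)
    (hint : (interior (⋂ i, {u | T i u = u}) ∩ Q).Nonempty)
    (J : ℕ → Finset ι) (lam : ι → ℕ → H → ℝ) (hlam : ∀ k u, ∀ i ∈ J k, 0 ≤ lam i k u)
    (hlamsum : ∀ k u, ∑ i ∈ J k, lam i k u = 1) {lam₀ : ℝ} (hlam₀ : 0 < lam₀)
    (hlamlb : ∀ i k u, i ∈ J k → T i u ≠ u → lam₀ ≤ lam i k u)
    (α : ℕ → ℝ) (hα : ∀ k, 0 < α k ∧ α k ≤ 2) (r : ℕ → ℝ) (hr : ∀ k, 0 < r k)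
    (hr₀ : Tendsto r atTop (𝓝 0))
    (hdiv : Tendsto (fun n => ∑ k ∈ Finset.range n, α k * r k) atTop atTop)
    (φ : ι → H → ℝ) (hφ : ∀ S : Set H, Bornology.IsBounded S →
      ∃ δ Δ : ℝ, 0 < δ ∧ δ ≤ Δ ∧ ∀ i, ∀ u ∈ S, δ ≤ φ i u ∧ φ i u ≤ Δ)
    (x : ℕ → H) (hx₀ : x 0 ∈ Q)
    (hx : ∀ k, x (k + 1) = P (x k + α (Nat.count (fun n => x n ≠ x (n + 1)) k) •
      ∑ i ∈ J k, lam i k (x k) •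
        relaxedStep (T i) (r (Nat.count (fun n => x n ≠ x (n + 1)) k) / φ i (x k)) (x k)))
    (hwm : ∀ u ∉ ⋂ i, {v | T i v = v}, {k | ∃ i ∈ J k, T i u ≠ u}.Infinite)
    (hbd : Bornology.IsBounded (Set.range x)) :
    ∃ k, x k ∈ (⋂ i, {u | T i u = u}) ∩ Q := by
  by_contra! hno
  obtain ⟨z, hzC, hzQ⟩ := hint
  obtain ⟨ρ, hρ, hball⟩ : ∃ ρ > 0, ∀ i, ∀ y ∈ closedBall z ρ, T i y = y := by
    obtain ⟨ρ, hρ, hsub⟩ := nhds_basis_closedBall.mem_iff.mp (mem_interior_iff_mem_nhds.mp hzC)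
    exact ⟨ρ, hρ, fun i y hy => Set.mem_iInter.mp (hsub hy) i⟩
  obtain ⟨δ, Δ, hδ, hδΔ, hφx⟩ := hφ _ hbd
  have hΔ : 0 < Δ := hδ.trans_le hδΔ
  have hxQ : ∀ k, x k ∈ Q := by
    rintro (_ | k)
    exacts [hx₀, hx k ▸ hPmem _]
  set cnt := Nat.count (fun n => x n ≠ x (n + 1))
  have hmoves : ∀ k, x (k + 1) ≠ x k ↔ ∃ i ∈ J k, T i (x k) ≠ x k := fun k => by
    rw [hx k]
    exact proj_step_ne_iff hT hQ hPmem hPmin hzQ hρ hball (hlam k (x k))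
      (fun i hi hTi => hlam₀.trans_le (hlamlb i k _ hi hTi))
      (fun i _ => div_nonneg (hr _).le (hδ.le.trans (hφx i _ ⟨k, rfl⟩).1)) (hα _).1 (hxQ k)
  have hinf : {k | x k ≠ x (k + 1)}.Infinite :=
    infinite_setOf_ne_succ (A := fun k u => ∃ i ∈ J k, T i u ≠ u) (fun k => (hmoves k).2)
      fun n => hwm _ fun h => hno n ⟨h, hxQ n⟩
  obtain ⟨N, hN⟩ := eventually_atTop.mp
    (hr₀.eventually (eventually_le_nhds (show (0 : ℝ) < δ * ρ / 2 by positivity)))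
  refine hinf (finite_setOf_of_descent (a := fun k => ‖x k - z‖ ^ 2)
    (s := fun n => lam₀ * ρ / Δ * (α n * r n)) (N := N) (fun k => sq_nonneg _) ?_ ?_ ?_)
  · simp_rw [← Finset.mul_sum]
    exact hdiv.const_mul_atTop (by positivity)
  · intro k hk hmoved
    obtain ⟨i₀, hi₀, hTi₀⟩ := (hmoves k).1 (Ne.symm hmoved)
    have hdesc := norm_proj_step_sub_sq_add_le hT hQ hPmem hPmin hzQ hρ.le hball
      (hlam k (x k)) (hlamsum k (x k)) (hr _) hδ (fun i _ => hφx i _ ⟨k, rfl⟩) (hN _ hk)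
      (hα (cnt k)).1.le (hα (cnt k)).2 hi₀ hTi₀ (hlamlb i₀ k _ hi₀ hTi₀)
    rwa [← hx k] at hdesc
  · intro k hk
    rw [← not_not.mp hk]

section Sampling

variable {I Ω : Type*} [MeasurableSpace Ω] {μ : Measure Ω} {Ik : ℕ → Ω → Finset I}

lemma measure_preimage_eq_of_fibers [Countable I] {X Y : Ω → Finset I}
    (hX : ∀ J, MeasurableSet (X ⁻¹' {J})) (hY : ∀ J, MeasurableSet (Y ⁻¹' {J}))
    (h : ∀ J, μ (X ⁻¹' {J}) = μ (Y ⁻¹' {J})) (A : Set (Finset I)) :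
    μ (X ⁻¹' A) = μ (Y ⁻¹' A) := by
  rw [← tsum_measure_preimage_singleton A.to_countable fun J _ => hX J,
    ← tsum_measure_preimage_singleton A.to_countable fun J _ => hY J]
  simp only [h]

lemma iIndep_generateFrom_fibers (hmeas : ∀ k J, MeasurableSet {ω | Ik k ω = J})
    (hindep : ∀ (K : Finset ℕ) (J : ℕ → Finset I),
      μ (⋂ k ∈ K, {ω | Ik k ω = J k}) = ∏ k ∈ K, μ {ω | Ik k ω = J k}) :
    iIndep (fun k => MeasurableSpace.generateFrom {s | ∃ J, s = {ω | Ik k ω = J}}) μ := by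
  refine iIndepSets.iIndep (fun k => MeasurableSpace.generateFrom_le ?_) _ (fun k => ?_)
    (fun k => rfl) ?_
  · rintro _ ⟨J, rfl⟩
    exact hmeas k J
  · rintro _ ⟨J, rfl⟩ _ ⟨J', rfl⟩ ⟨ω, hω, hω'⟩
    obtain rfl : J = J' := hω.symm.trans hω'
    exact ⟨J, Set.inter_self _⟩
  · rw [iIndepSets_iff]
    intro K f hf
    choose J hJ using hf
    have hfJ : ∀ k ∈ K, f k = {ω | Ik k ω = if hk : k ∈ K then J k hk else ∅} := fun k hk => by
      rw [hJ k hk, dif_pos hk]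
    rw [Set.iInter₂_congr hfJ, hindep]
    exact Finset.prod_congr rfl fun k hk => by rw [hfJ k hk]

lemma ae_frequently_mem [Countable I] [IsProbabilityMeasure μ]
    (hmeas : ∀ k J, MeasurableSet {ω | Ik k ω = J})
    (hident : ∀ k n J, μ {ω | Ik k ω = J} = μ {ω | Ik n ω = J})
    (hindep : ∀ (K : Finset ℕ) (J : ℕ → Finset I),
      μ (⋂ k ∈ K, {ω | Ik k ω = J k}) = ∏ k ∈ K, μ {ω | Ik k ω = J k})
    {i : I} (hi : 0 < μ {ω | i ∈ Ik 0 ω}) :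
    ∀ᵐ ω ∂μ, ∃ᶠ k in atTop, i ∈ Ik k ω := by
  have hfib : ∀ k, MeasurableSet[MeasurableSpace.generateFrom {s | ∃ J, s = {ω | Ik k ω = J}}]
      {ω | i ∈ Ik k ω} := fun k => by
    rw [show {ω | i ∈ Ik k ω} = Ik k ⁻¹' {J | i ∈ J} from rfl, ← Set.biUnion_preimage_singleton]
    exact MeasurableSet.biUnion (Set.to_countable _)
      fun J _ => MeasurableSpace.measurableSet_generateFrom ⟨J, rfl⟩
  have hmeas' : ∀ k, MeasurableSet {ω | i ∈ Ik k ω} := fun k =>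
    MeasurableSpace.generateFrom_le (by rintro _ ⟨J, rfl⟩; exact hmeas k J) _ (hfib k)
  have hind : iIndepSet (fun k => {ω | i ∈ Ik k ω}) μ :=
    (iIndep_generateFrom_fibers hmeas hindep).iIndepSets'.iIndepSet_of_mem hfib hmeas'
  have hsame : ∀ k, μ {ω | i ∈ Ik k ω} = μ {ω | i ∈ Ik 0 ω} := fun k =>
    measure_preimage_eq_of_fibers (hmeas k) (hmeas 0) (hident k 0) {J | i ∈ J}
  have hlimsup := measure_limsup_eq_one hmeas' hind
    (by simp only [hsame]; exact ENNReal.tsum_const_eq_top_of_ne_zero hi.ne')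
  refine ((ae_mem_iff_measure_eq (MeasurableSet.measurableSet_limsup hmeas').nullMeasurableSet).2
    (hlimsup.trans measure_univ.symm)).mono fun ω hω => ?_
  exact (mem_limsup_iff_frequently_mem (s := fun k => {ω | i ∈ Ik k ω})).1 hω

lemma ae_infinite_setOf_exists_mem [Countable I] [IsProbabilityMeasure μ]
    (hmeas : ∀ k J, MeasurableSet {ω | Ik k ω = J})
    (hident : ∀ k n J, μ {ω | Ik k ω = J} = μ {ω | Ik n ω = J})
    (hindep : ∀ (K : Finset ℕ) (J : ℕ → Finset I),
      μ (⋂ k ∈ K, {ω | Ik k ω = J k}) = ∏ k ∈ K, μ {ω | Ik k ω = J k}) :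
    ∀ᵐ ω ∂μ, ∀ S : Set I, 0 < μ {ω' | ∃ i ∈ Ik 0 ω', i ∈ S} →
      {k | ∃ i ∈ Ik k ω, i ∈ S}.Infinite := by
  have h : ∀ᵐ ω ∂μ, ∀ i, 0 < μ {ω' | i ∈ Ik 0 ω'} → ∃ᶠ k in atTop, i ∈ Ik k ω := by
    refine ae_all_iff.2 fun i => ?_
    by_cases hi : 0 < μ {ω' | i ∈ Ik 0 ω'}
    · exact (ae_frequently_mem hmeas hident hindep hi).mono fun _ h _ => h
    · exact Eventually.of_forall fun _ h => absurd h hi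
  filter_upwards [h] with ω hω S hS
  obtain ⟨i, hiS, hi⟩ : ∃ i ∈ S, 0 < μ {ω' | i ∈ Ik 0 ω'} := by
    by_contra! h0
    refine hS.ne' (measure_mono_null (fun ω' ⟨i, hi, hiS⟩ => Set.mem_biUnion hiS hi) ?_)
    exact (measure_biUnion_null_iff S.to_countable).2 fun i hi => nonpos_iff_eq_zero.1 (h0 i hi)
  exact (Nat.frequently_atTop_iff_infinite.1 (hω i hi)).mono fun k hk => ⟨i, hk, hiS⟩

end Sampling

lemma cond_eq_one_of_ae_imp {Ω : Type*} [MeasurableSpace Ω] {μ : Measure Ω} [IsFiniteMeasure μ]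
    {s t : Set Ω} (hs : μ s ≠ 0) (h : ∀ᵐ ω ∂μ, ω ∈ s → ω ∈ t) : μ[t|s] = 1 := by
  have := cond_isProbabilityMeasure (μ := μ) hs
  refine le_antisymm prob_le_one ?_
  have hsub : s \ t ⊆ {ω | ¬(ω ∈ s → ω ∈ t)} := fun ω hω h => hω.2 (h hω.1)
  have hst : μ (s ∩ t) = μ s := measure_inter_conull' (measure_mono_null hsub (ae_iff.1 h))
  calc 1 = (μ s)⁻¹ * μ.restrict s (s ∩ t) := by
        rw [Measure.restrict_eq_self _ Set.inter_subset_left, hst,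
          ENNReal.inv_mul_cancel hs (measure_ne_top _ _)]
    _ ≤ μ[t|s] := by
        rw [ProbabilityTheory.cond, Measure.smul_apply, smul_eq_mul]
        gcongr
        exact Set.inter_subset_right

theorem stmt16_general {H : Type*} [NormedAddCommGroup H] [InnerProductSpace ℝ H]
    {I : Type*} [Countable I]
    {Ω : Type*} [MeasurableSpace Ω] (μ : Measure Ω) [IsProbabilityMeasure μ]
    (T : I → H → H)
    (hT : ∀ i, ∀ x z, T i z = z → ⟪x - T i x, z - T i x⟫ ≤ 0)
    (Q : Set H) (hQconvex : Convex ℝ Q)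
    (PQ : H → H) (hPQmem : ∀ u, PQ u ∈ Q)
    (hPQmin : ∀ u, ∀ w ∈ Q, ‖PQ u - u‖ ≤ ‖w - u‖)
    -- (i) interior condition
    (hint : (interior (⋂ i, {u | T i u = u}) ∩ Q).Nonempty)
    -- the random control sequence
    (Ik : ℕ → Ω → Finset I)
    (hmeas : ∀ (k : ℕ) (J : Finset I), MeasurableSet {ω | Ik k ω = J})
    -- identically distributed
    (hident : ∀ (k n : ℕ) (J : Finset I), μ {ω | Ik k ω = J} = μ {ω | Ik n ω = J})
    -- independent
    (hindep : ∀ (K : Finset ℕ) (J : ℕ → Finset I),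
      μ (⋂ k ∈ K, {ω | Ik k ω = J k}) = ∏ k ∈ K, μ {ω | Ik k ω = J k})
    -- positive probability of encountering a violated constraint
    (hprob : ∀ u : H, u ∉ ⋂ i, {v | T i v = v} →
      ∀ k, 0 < μ {ω | ∃ i ∈ Ik k ω, T i u ≠ u})
    -- the weights
    (lam : I → ℕ → H → ℝ) (hlam01 : ∀ i k u, 0 ≤ lam i k u ∧ lam i k u ≤ 1)
    (hlamsum : ∀ (k : ℕ) (ω : Ω) (u : H), ∑ i ∈ Ik k ω, lam i k u = 1)
    -- relaxations and overrelaxations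
    (α : ℕ → ℝ) (hα : ∀ k, 0 < α k ∧ α k ≤ 2)
    (r : ℕ → ℝ) (hrpos : ∀ k, 0 < r k)
    (hr0 : Filter.Tendsto r Filter.atTop (nhds 0))
    (hdiv : Filter.Tendsto (fun n => ∑ k ∈ Finset.range n, α k * r k)
      Filter.atTop Filter.atTop)
    (φ : I → H → ℝ)
    (hφbd : ∀ S : Set H, Bornology.IsBounded S →
      ∃ δ Δ : ℝ, 0 < δ ∧ δ ≤ Δ ∧ ∀ i, ∀ u ∈ S, δ ≤ φ i u ∧ φ i u ≤ Δ)
    -- weights of violated constraints are bounded from below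
    (lam0 : ℝ) (hlam0 : 0 < lam0)
    (hlamlb : ∀ (i : I) (k : ℕ) (ω : Ω) (u : H),
      i ∈ Ik k ω → T i u ≠ u → lam0 ≤ lam i k u)
    -- the random iterates and the correction-step counters
    (x0 : H) (hx0Q : x0 ∈ Q)
    (x : Ω → ℕ → H) (cnt : Ω → ℕ → ℕ)
    (hx0 : ∀ ω, x ω 0 = x0)
    (hcnt : ∀ ω k, cnt ω k =
      ((Finset.range k).filter (fun n => x ω n ≠ x ω (n + 1))).card)
    (hxrec : ∀ ω k, x ω (k + 1) = PQ (x ω k + α (cnt ω k) •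
      ∑ i ∈ Ik k ω,
        (lam i k (x ω k) *
          if T i (x ω k) ≠ x ω k then
            (r (cnt ω k) / φ i (x ω k) + ‖T i (x ω k) - x ω k‖) / ‖T i (x ω k) - x ω k‖
          else 0) • (T i (x ω k) - x ω k))) :
    -- (a) almost surely the realized control sequence is well matched with C
    μ {ω | ∀ u : H, u ∉ ⋂ i, {v | T i v = v} →
        {k : ℕ | ∃ i ∈ Ik k ω, T i u ≠ u}.Infinite} = 1 ∧
    -- (b) conditional finite convergence given boundedness
    (0 < μ {ω | Bornology.IsBounded (Set.range (x ω))} →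
      ProbabilityTheory.cond μ {ω | Bornology.IsBounded (Set.range (x ω))}
        {ω | ∃ k, x ω k ∈ (⋂ i, {u | T i u = u}) ∩ Q} = 1) := by
  have hwm : ∀ᵐ ω ∂μ, ∀ u ∉ ⋂ i, {v | T i v = v}, {k | ∃ i ∈ Ik k ω, T i u ≠ u}.Infinite :=
    (ae_infinite_setOf_exists_mem hmeas hident hindep).mono fun ω h u hu =>
      h {i | T i u ≠ u} (hprob u hu 0)
  refine ⟨(measure_congr (ae_eq_univ.2 (ae_iff.1 hwm))).trans measure_univ,
    fun hpos => cond_eq_one_of_ae_imp hpos.ne' ?_⟩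
  filter_upwards [hwm] with ω hωwm hbd
  have hcnt' : cnt ω = Nat.count (fun n => x ω n ≠ x ω (n + 1)) :=
    funext fun k => by rw [hcnt, Nat.count_eq_card_filter_range]
  refine exists_iterate_mem_of_wellMatched T hT hQconvex hPQmem hPQmin hint (fun k => Ik k ω) lam
    (fun k u i _ => (hlam01 i k u).1) (fun k u => hlamsum k ω u) hlam0
    (fun i k u => hlamlb i k ω u) α hα r hrpos hr0 hdiv φ hφbd (x ω) (hx0 ω ▸ hx0Q)
    (fun k => ?_) hωwm hbd
  rw [hxrec ω k, hcnt']
  simp only [relaxedStep, mul_smul]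

/-- Theorem 5.4 (stochastic main result): (a) almost surely the realized random control
sequence is well matched with `C`; (b) conditioned on boundedness of the iterates (an
event of positive probability), the iterates almost surely reach `C ∩ Q` in finitely
many steps. -/
theorem stmt16 {H : Type*} [NormedAddCommGroup H] [InnerProductSpace ℝ H] [CompleteSpace H]
    {I : Type*} [Countable I]
    {Ω : Type*} [MeasurableSpace Ω] (μ : Measure Ω) [IsProbabilityMeasure μ]
    (T : I → H → H)
    (hfixne : ∀ i, ∃ z, T i z = z)
    (hT : ∀ i, ∀ x z, T i z = z → ⟪x - T i x, z - T i x⟫ ≤ 0)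
    (Q : Set H) (hQne : Q.Nonempty) (hQclosed : IsClosed Q) (hQconvex : Convex ℝ Q)
    (PQ : H → H) (hPQmem : ∀ u, PQ u ∈ Q)
    (hPQmin : ∀ u, ∀ w ∈ Q, ‖PQ u - u‖ ≤ ‖w - u‖)
    -- (i) interior condition
    (hint : (interior (⋂ i, {u | T i u = u}) ∩ Q).Nonempty)
    -- the random control sequence
    (Ik : ℕ → Ω → Finset I)
    (hIkne : ∀ k ω, (Ik k ω).Nonempty)
    (M : ℕ) (hIkM : ∀ k ω, (Ik k ω).card ≤ M)
    (hmeas : ∀ (k : ℕ) (J : Finset I), MeasurableSet {ω | Ik k ω = J})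
    -- identically distributed
    (hident : ∀ (k n : ℕ) (J : Finset I), μ {ω | Ik k ω = J} = μ {ω | Ik n ω = J})
    -- independent
    (hindep : ∀ (K : Finset ℕ) (J : ℕ → Finset I),
      μ (⋂ k ∈ K, {ω | Ik k ω = J k}) = ∏ k ∈ K, μ {ω | Ik k ω = J k})
    -- positive probability of encountering a violated constraint
    (hprob : ∀ u : H, u ∉ ⋂ i, {v | T i v = v} →
      ∀ k, 0 < μ {ω | ∃ i ∈ Ik k ω, T i u ≠ u})
    -- the weights
    (lam : I → ℕ → H → ℝ) (hlam01 : ∀ i k u, 0 ≤ lam i k u ∧ lam i k u ≤ 1)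
    (hlamsum : ∀ (k : ℕ) (ω : Ω) (u : H), ∑ i ∈ Ik k ω, lam i k u = 1)
    -- relaxations and overrelaxations
    (α : ℕ → ℝ) (hα : ∀ k, 0 < α k ∧ α k ≤ 2)
    (r : ℕ → ℝ) (hrpos : ∀ k, 0 < r k)
    (hr0 : Filter.Tendsto r Filter.atTop (nhds 0))
    (hdiv : Filter.Tendsto (fun n => ∑ k ∈ Finset.range n, α k * r k)
      Filter.atTop Filter.atTop)
    (φ : I → H → ℝ) (hφpos : ∀ i u, 0 < φ i u)
    (hφbd : ∀ S : Set H, Bornology.IsBounded S →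
      ∃ δ Δ : ℝ, 0 < δ ∧ δ ≤ Δ ∧ ∀ i, ∀ u ∈ S, δ ≤ φ i u ∧ φ i u ≤ Δ)
    -- weights of violated constraints are bounded from below
    (lam0 : ℝ) (hlam0 : 0 < lam0)
    (hlamlb : ∀ (i : I) (k : ℕ) (ω : Ω) (u : H),
      i ∈ Ik k ω → T i u ≠ u → lam0 ≤ lam i k u)
    -- the random iterates and the correction-step counters
    (x0 : H) (hx0Q : x0 ∈ Q)
    (x : Ω → ℕ → H) (cnt : Ω → ℕ → ℕ)
    (hx0 : ∀ ω, x ω 0 = x0)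
    (hcnt : ∀ ω k, cnt ω k =
      ((Finset.range k).filter (fun n => x ω n ≠ x ω (n + 1))).card)
    (hxrec : ∀ ω k, x ω (k + 1) = PQ (x ω k + α (cnt ω k) •
      ∑ i ∈ Ik k ω,
        (lam i k (x ω k) *
          if T i (x ω k) ≠ x ω k then
            (r (cnt ω k) / φ i (x ω k) + ‖T i (x ω k) - x ω k‖) / ‖T i (x ω k) - x ω k‖
          else 0) • (T i (x ω k) - x ω k))) :
    -- (a) almost surely the realized control sequence is well matched with C
    μ {ω | ∀ u : H, u ∉ ⋂ i, {v | T i v = v} →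
        {k : ℕ | ∃ i ∈ Ik k ω, T i u ≠ u}.Infinite} = 1 ∧
    -- (b) conditional finite convergence given boundedness
    (0 < μ {ω | Bornology.IsBounded (Set.range (x ω))} →
      ProbabilityTheory.cond μ {ω | Bornology.IsBounded (Set.range (x ω))}
        {ω | ∃ k, x ω k ∈ (⋂ i, {u | T i u = u}) ∩ Q} = 1) :=
  stmt16_general μ T hT Q hQconvex PQ hPQmem hPQmin hint Ik hmeas hident hindep hprob lam hlam01
    hlamsum α hα r hrpos hr0 hdiv φ hφbd lam0 hlam0 hlamlb x0 hx0Q x cnt hx0 hcnt hxrec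
end

section
/- In ℝ², let C_1 := {(x,y) : x ≤ 0} and C_2 := {(x,y) : y ≤ 0}, let i_k := 1 if k is even and i_k := 2 if k is odd, and let r_k := 1/(k+1) if k is even and r_k := 1/2^k if k is odd. Define (x_0, y_0) := (1,1) and (x_{k+1}, y_{k+1}) := (x_k, y_k) + ((r_k + d((x_k,y_k), C_{i_k}))/(2 d((x_k,y_k), C_{i_k}))) (P_{C_{i_k}}((x_k,y_k)) − (x_k,y_k)) whenever (x_k,y_k) ∉ C_{i_k}, and (x_{k+1},y_{k+1}) := (x_k,y_k) otherwise. Then r_k → 0 and Σ_{k=0}^∞ r_k = ∞, yet (x_k, y_k) ∉ C_1 ∩ C_2 for every k = 0,1,2,…; in fact x_k = 0 for all k ≥ 1, y_{2k−1} = y_{2k−2}, and y_{2k} = 1/2^{2k} > 0 for all k ≥ 1. -/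
/-! The nearest point of the half-space `{q | q i ≤ 0}` to a point `p` with `p i > 0` is `p` with
its `i`-th coordinate set to `0`, at distance `p i`. A relaxed step with parameter `s` therefore
replaces `p i` by `(p i - s) / 2` and leaves the other coordinates alone. From `(1, 1)` the first
step (`r₀ = 1`) lands on the `y`-axis; from then on the even steps do nothing, while the odd step
`k = 2m + 1` sees `y = 4⁻ᵐ` and `r_k = 4⁻ᵐ / 2`, so it returns `y = 4⁻⁽ᵐ⁺¹⁾`: the overrelaxation
is always exactly too small to reach `y ≤ 0`. -/

open Metric Filter Finset

section HalfSpace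

variable {ι : Type*} [Fintype ι] [DecidableEq ι] {i : ι}

-- Pythagoras, with the cross term `⟪q - c, c - p⟫ = -(q i * p i) ≥ 0`.
lemma dist_sq_add_sq_le_dist_sq_of_nonpos {p q : EuclideanSpace ℝ ι} (hp : 0 ≤ p i)
    (hq : q i ≤ 0) :
    dist q (p - EuclideanSpace.single i (p i)) ^ 2 + p i ^ 2 ≤ dist q p ^ 2 := by
  set c := p - EuclideanSpace.single i (p i) with hc
  have hqc : (q - c) i = q i := by simp [hc]
  rw [dist_eq_norm, dist_eq_norm, show q - p = (q - c) - EuclideanSpace.single i (p i) by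
    rw [hc]; abel, norm_sub_sq_real (q - c), EuclideanSpace.inner_single_right,
    PiLp.norm_single, Real.norm_eq_abs, sq_abs, hqc, conj_trivial]
  nlinarith

lemma dist_sub_single_self {p : EuclideanSpace ℝ ι} (hp : 0 ≤ p i) :
    dist (p - EuclideanSpace.single i (p i)) p = p i := by
  simp [abs_of_nonneg hp]

lemma infDist_halfSpace {p : EuclideanSpace ℝ ι} (hp : 0 ≤ p i) :
    infDist p {q | q i ≤ 0} = p i := by
  have hc : p - EuclideanSpace.single i (p i) ∈ {q : EuclideanSpace ℝ ι | q i ≤ 0} := by simp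
  refine le_antisymm ?_ ((le_infDist ⟨_, hc⟩).2 fun q hq => ?_)
  · exact (infDist_le_dist_of_mem hc).trans_eq (by rw [dist_comm, dist_sub_single_self hp])
  · have := dist_sq_add_sq_le_dist_sq_of_nonpos hp hq
    rw [dist_comm]
    nlinarith [dist_nonneg (x := q) (y := p)]

lemma eq_sub_single_of_forall_dist_le {p x : EuclideanSpace ℝ ι} (hp : 0 ≤ p i) (hx : x i ≤ 0)
    (hmin : ∀ q ∈ {q : EuclideanSpace ℝ ι | q i ≤ 0}, dist x p ≤ dist q p) :
    x = p - EuclideanSpace.single i (p i) := by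
  have hxp : dist x p ≤ p i :=
    (hmin (p - EuclideanSpace.single i (p i)) (by simp)).trans_eq (dist_sub_single_self hp)
  have := dist_sq_add_sq_le_dist_sq_of_nonpos hp hx
  rw [← dist_le_zero]
  nlinarith [dist_nonneg (x := x) (y := p),
    dist_nonneg (x := x) (y := p - EuclideanSpace.single i (p i))]

lemma relaxed_projection_step {p x : EuclideanSpace ℝ ι} (hp : 0 < p i) (hx : x i ≤ 0)
    (hmin : ∀ q ∈ {q : EuclideanSpace ℝ ι | q i ≤ 0}, dist x p ≤ dist q p) (s : ℝ) :
    p + ((s + infDist p {q | q i ≤ 0}) / (2 * infDist p {q | q i ≤ 0})) • (x - p) =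
      p - EuclideanSpace.single i ((s + p i) / 2) := by
  rw [infDist_halfSpace hp.le, eq_sub_single_of_forall_dist_le hp.le hx hmin, sub_sub_cancel_left,
    smul_neg, ← sub_eq_add_neg]
  congr 1
  ext j
  by_cases hj : j = i
  · subst hj
    simp only [PiLp.smul_apply, PiLp.single_eq_same, smul_eq_mul]
    field_simp
  · simp [hj]

end HalfSpace

noncomputable def overrelax (k : ℕ) : ℝ := if Even k then 1 / ((k : ℝ) + 1) else 1 / 2 ^ k

lemma overrelax_nonneg (k : ℕ) : 0 ≤ overrelax k := by
  unfold overrelax; split_ifs <;> positivity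

lemma overrelax_le (k : ℕ) : overrelax k ≤ 1 / ((k : ℝ) + 1) := by
  unfold overrelax
  split_ifs
  · exact le_rfl
  · gcongr
    exact_mod_cast Nat.lt_two_pow_self

lemma overrelax_two_mul_add_one (m : ℕ) : overrelax (2 * m + 1) = 1 / (2 * 4 ^ m) := by
  rw [overrelax, if_neg (Nat.not_even_bit1 m), pow_succ, pow_mul, mul_comm]
  norm_num

lemma tendsto_overrelax : Tendsto overrelax atTop (nhds 0) :=
  squeeze_zero overrelax_nonneg overrelax_le tendsto_one_div_add_atTop_nhds_zero_nat

lemma not_summable_overrelax : ¬Summable overrelax := by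
  intro h
  have hhalf : Summable fun m : ℕ => 1 / 2 * (1 / ((m : ℝ) + 1)) := by
    refine (h.comp_injective (mul_right_injective₀ two_ne_zero)).of_nonneg_of_le
      (fun m => by positivity) fun m => ?_
    simp only [Function.comp_apply, overrelax, even_two_mul, if_true]
    rw [one_div_mul_one_div]
    gcongr
    push_cast
    linarith
  exact (not_summable_iff_tendsto_nat_atTop_of_nonneg fun m => by positivity).2
    Real.tendsto_sum_range_one_div_nat_succ_atTop ((summable_mul_left_iff one_half_pos.ne').1 hhalf)

lemma tendsto_sum_overrelax :
    Tendsto (fun n => ∑ k ∈ range n, overrelax k) atTop atTop :=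
  (not_summable_iff_tendsto_nat_atTop_of_nonneg overrelax_nonneg).1 not_summable_overrelax

local notation "ℝ²" => EuclideanSpace ℝ (Fin 2)

lemma orbit_succ_eq {P1 P2 : ℝ² → ℝ²}
    (hP1 : ∀ p, P1 p ∈ {q : ℝ² | q 0 ≤ 0} ∧ ∀ q ∈ {q : ℝ² | q 0 ≤ 0}, dist (P1 p) p ≤ dist q p)
    (hP2 : ∀ p, P2 p ∈ {q : ℝ² | q 1 ≤ 0} ∧ ∀ q ∈ {q : ℝ² | q 1 ≤ 0}, dist (P2 p) p ≤ dist q p)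
    {v : ℕ → ℝ²} (hv0 : v 0 = !₂[1, 1])
    (hvrec : ∀ k, v k ∉ (if Even k then {q : ℝ² | q 0 ≤ 0} else {q | q 1 ≤ 0}) →
      v (k + 1) = v k +
        ((overrelax k + infDist (v k) (if Even k then {q : ℝ² | q 0 ≤ 0} else {q | q 1 ≤ 0})) /
            (2 * infDist (v k) (if Even k then {q : ℝ² | q 0 ≤ 0} else {q | q 1 ≤ 0}))) •
          ((if Even k then P1 else P2) (v k) - v k))
    (hvrec' : ∀ k, v k ∈ (if Even k then {q : ℝ² | q 0 ≤ 0} else {q | q 1 ≤ 0}) →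
      v (k + 1) = v k)
    (k : ℕ) : v (k + 1) = !₂[0, 1 / 4 ^ ((k + 1) / 2)] := by
  have hv1 : v 1 = !₂[0, 1] := by
    have h := hvrec 0 (by simp [hv0])
    simp only [Even.zero, if_true] at h
    rw [h, relaxed_projection_step (by simp [hv0]) (hP1 _).1 (hP1 _).2, hv0]
    ext j; fin_cases j <;> norm_num [overrelax]
  have step_odd : ∀ k, ¬Even k → ∀ b : ℝ, 0 < b → v k = !₂[0, b] →
      v (k + 1) = !₂[0, (b - overrelax k) / 2] := by
    intro k hk b hb hvk
    have h := hvrec k (by simp [hk, hvk, hb])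
    simp only [hk, if_false] at h
    rw [h, relaxed_projection_step (by simp [hvk, hb]) (hP2 _).1 (hP2 _).2, hvk,
      show (b - overrelax k) / 2 = b - (overrelax k + b) / 2 by ring]
    ext j; fin_cases j <;> simp
  have step_even : ∀ k, Even k → v k 0 = 0 → v (k + 1) = v k := fun k hk h0 =>
    hvrec' k (by simp [hk, h0])
  induction k with
  | zero => simpa using hv1
  | succ k ih =>
    rcases Nat.even_or_odd (k + 1) with hk | ⟨m, hm⟩
    · rw [step_even _ hk (by simp [ih]), ih]
      obtain ⟨m, hm⟩ := hk
      rw [show (k + 1 + 1) / 2 = (k + 1) / 2 by omega]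
    · rw [step_odd _ (Nat.not_even_iff_odd.2 ⟨m, hm⟩) _ (by positivity) ih, hm,
        show (2 * m + 1) / 2 = m by omega, show (2 * m + 1 + 1) / 2 = m + 1 by omega,
        overrelax_two_mul_add_one,
        show (1 / 4 ^ m - 1 / (2 * 4 ^ m)) / 2 = (1 : ℝ) / 4 ^ (m + 1) by field_simp; ring]

/-- Example A.1: the relaxed alternating projection method (with relaxation `1/2`) applied
to the two halfplanes `C₁ = {x ≤ 0}`, `C₂ = {y ≤ 0}` in `ℝ²` with the non-monotone
overrelaxations `r_k` (used without the correction-step counter) never reaches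
`C₁ ∩ C₂`, although `r_k → 0` and `∑ r_k = ∞`. -/
theorem stmt18
    (C1 C2 : Set (EuclideanSpace ℝ (Fin 2)))
    (hC1 : C1 = {p | p 0 ≤ 0}) (hC2 : C2 = {p | p 1 ≤ 0})
    (P1 P2 : EuclideanSpace ℝ (Fin 2) → EuclideanSpace ℝ (Fin 2))
    (hP1 : ∀ p, P1 p ∈ C1 ∧ ∀ q ∈ C1, dist (P1 p) p ≤ dist q p)
    (hP2 : ∀ p, P2 p ∈ C2 ∧ ∀ q ∈ C2, dist (P2 p) p ≤ dist q p)
    (r : ℕ → ℝ)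
    (hr : ∀ k, r k = if Even k then 1 / ((k : ℝ) + 1) else 1 / 2 ^ k)
    (v : ℕ → EuclideanSpace ℝ (Fin 2))
    (hv0 : v 0 = !₂[1, 1])
    (hvrec : ∀ k, v k ∉ (if Even k then C1 else C2) →
      v (k + 1) = v k +
        ((r k + Metric.infDist (v k) (if Even k then C1 else C2)) /
            (2 * Metric.infDist (v k) (if Even k then C1 else C2))) •
          ((if Even k then P1 else P2) (v k) - v k))
    (hvrec' : ∀ k, v k ∈ (if Even k then C1 else C2) → v (k + 1) = v k) :
    Filter.Tendsto r Filter.atTop (nhds 0) ∧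
    Filter.Tendsto (fun n => ∑ k ∈ Finset.range n, r k) Filter.atTop Filter.atTop ∧
    (∀ k, v k ∉ C1 ∩ C2) ∧
    (∀ k, 1 ≤ k → v k 0 = 0) ∧
    (∀ k : ℕ, 1 ≤ k →
      v (2 * k - 1) 1 = v (2 * k - 2) 1 ∧
      v (2 * k) 1 = 1 / 2 ^ (2 * k) ∧ 0 < v (2 * k) 1) := by
  subst hC1 hC2
  obtain rfl : r = overrelax := funext hr
  have hv := orbit_succ_eq hP1 hP2 hv0 hvrec hvrec'
  have hy : ∀ k, v k 1 = 1 / 4 ^ (k / 2) := by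
    rintro (_ | k)
    · simp [hv0]
    · simp [hv k]
  refine ⟨tendsto_overrelax, tendsto_sum_overrelax, ?_, ?_, fun k hk => ?_⟩
  · rintro (_ | k) ⟨h0, h1⟩
    · norm_num [hv0] at h0
    · have : (0 : ℝ) < v (k + 1) 1 := by rw [hy]; positivity
      exact (lt_of_lt_of_le this h1).false
  · rintro (_ | k) hk
    · omega
    · simp [hv k]
  · rw [hy, hy, hy, show (2 * k - 1) / 2 = (2 * k - 2) / 2 by omega, show 2 * k / 2 = k by omega,
      pow_mul]
    norm_num
end
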